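/- Let a : ℝ → ℝ be positively homogeneous: a(c·t) = c·a(t) for all c > 0 and all t ∈ ℝ. Fix an input x ∈ EuclideanSpace ℝ (Fin D), first-layer weights w₁ : Fin D₁ → EuclideanSpace ℝ (Fin D), parameters μ₁, β₁ : Fin D₁ → ℝ, σ₁, γ₁ : Fin D₁ → ℝ with σ₁ k ≠ 0 and γ₁ k > 0 for all k, second-layer weights W₂ : Fin D₂ → Fin D₁ → ℝ, and parameters μ₂, β₂, σ₂, γ₂ : Fin D₂ → ℝ with σ₂ r ≠ 0. Then for every output unit r, a( (∑_{k} W₂ r k · a( ((⟪w₁ k, x⟫ − μ₁ k)/σ₁ k)·γ₁ k + β₁ k ) − μ₂ r)/σ₂ r · γ₂ r + β₂ r ) = a( (∑_{k} (γ₁ k · W₂ r k) · a( (⟪w₁ k, x⟫ − μ₁ k)/σ₁ k + β₁ k / γ₁ k ) − μ₂ r)/σ₂ r · γ₂ r + β₂ r ). Hence the batch-normalization scale parameters γ₁ can be absorbed into the next layer's weights W₂ and the shifted biases β₁/γ₁. -/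
import Mathlib

open scoped RealInnerProductSpace BigOperators

/-- redundancy of the BN scale parameter `γ`.
For any positively homogeneous activation `a` (`a (c·t) = c·a t` for `c > 0`),
in a two-layer batch-normalized network the scale parameters `γ₁` can be
absorbed into the next layer's weights `W₂` and the shifted biases `β₁ / γ₁`. -/
theorem bn_gamma_redundant
    (D D₁ D₂ : ℕ)
    (a : ℝ → ℝ) (ha : ∀ c : ℝ, 0 < c → ∀ t : ℝ, a (c * t) = c * a t)
    (x : EuclideanSpace ℝ (Fin D))
    (w₁ : Fin D₁ → EuclideanSpace ℝ (Fin D))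
    (μ₁ β₁ σ₁ γ₁ : Fin D₁ → ℝ)
    (hσ₁ : ∀ k, σ₁ k ≠ 0) (hγ₁ : ∀ k, 0 < γ₁ k)
    (W₂ : Fin D₂ → Fin D₁ → ℝ)
    (μ₂ β₂ σ₂ γ₂ : Fin D₂ → ℝ) (hσ₂ : ∀ r, σ₂ r ≠ 0) :
    ∀ r : Fin D₂,
      a ((∑ k : Fin D₁, W₂ r k *
            a ((⟪w₁ k, x⟫ - μ₁ k) / σ₁ k * γ₁ k + β₁ k) - μ₂ r) / σ₂ r
          * γ₂ r + β₂ r)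
      =
      a ((∑ k : Fin D₁, (γ₁ k * W₂ r k) *
            a ((⟪w₁ k, x⟫ - μ₁ k) / σ₁ k + β₁ k / γ₁ k) - μ₂ r) / σ₂ r
          * γ₂ r + β₂ r) := by
  intro r
  have hsum : ∀ k : Fin D₁, W₂ r k *
      a ((⟪w₁ k, x⟫ - μ₁ k) / σ₁ k * γ₁ k + β₁ k)
      = (γ₁ k * W₂ r k) * a ((⟪w₁ k, x⟫ - μ₁ k) / σ₁ k + β₁ k / γ₁ k) := by
    intro k
    have hk := (hγ₁ k).ne'
    have h : (⟪w₁ k, x⟫ - μ₁ k) / σ₁ k * γ₁ k + β₁ k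
        = γ₁ k * ((⟪w₁ k, x⟫ - μ₁ k) / σ₁ k + β₁ k / γ₁ k) := by
      field_simp
    rw [h, ha _ (hγ₁ k)]; ring
  rw [Finset.sum_congr rfl (fun k _ => hsum k)]
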